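/- arXiv:2108.01733 — 2 statements merged into one kernel-verified Lean document; each statement's English description precedes it below -/
import Mathlib

section
/- Suppose three unit vectors n, n', n'' in ℝ² and positive reals σ, σ', σ'' satisfy σ n + σ' n' + σ'' n'' = 0. If R', R'' are the (unique) planar rotations with R' n = n' and R'' n = n'', then for every vector v ∈ ℝ²: σ v + σ' R' v + σ'' R'' v = 0. -/
/-!
A rotation of `ℝ²` is multiplication by a complex number `z` (written in the basis `1, i`), so
`σ + σ' R' + σ'' R''` is multiplication by `w = σ + σ' z' + σ'' z''`. The Herring condition says
that this map kills the nonzero vector `n`; since `ℂ` is a field, `w = 0`, and the map vanishes.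
-/

open Matrix

theorem Algebra.leftMulMatrix_mulVec_eq_zero_iff {R S m : Type*} [CommSemiring R] [DivisionRing S]
    [Algebra R S] [Fintype m] [DecidableEq m] (b : Module.Basis m R S) {w : S} {v : m → R} :
    leftMulMatrix b w *ᵥ v = 0 ↔ w = 0 ∨ v = 0 := by
  refine ⟨fun h ↦ or_iff_not_imp_left.mpr fun hw ↦ ?_, ?_⟩
  · calc v = leftMulMatrix b (w⁻¹ * w) *ᵥ v := by simp [hw]
      _ = 0 := by rw [map_mul, ← mulVec_mulVec, h, mulVec_zero]
  · rintro (rfl | rfl) <;> simp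

theorem Matrix.exists_leftMulMatrix_complex_eq_of_mul_transpose_eq_one
    {R : Matrix (Fin 2) (Fin 2) ℝ} (hR : R * Rᵀ = 1) (hdet : R.det = 1) :
    ∃ z : ℂ, Algebra.leftMulMatrix Complex.basisOneI z = R := by
  refine ⟨⟨R 0 0, R 1 0⟩, ?_⟩
  have h00 := congrFun₂ hR 0 0
  have h01 := congrFun₂ hR 0 1
  have h11 := congrFun₂ hR 1 1
  simp [mul_apply, Fin.sum_univ_two] at h00 h01 h11
  rw [det_fin_two] at hdet
  rw [Algebra.leftMulMatrix_complex]
  ext i j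
  fin_cases i <;> fin_cases j <;> simp <;>
    nlinarith [sq_nonneg (R 0 0 - R 1 1), sq_nonneg (R 0 1 + R 1 0)]

theorem herring_by_rotation_planar_general
    (σ σ' σ'' : ℝ)
    (n n' n'' : Fin 2 → ℝ)
    (hn : n ⬝ᵥ n = 1)
    (hherring : σ • n + σ' • n' + σ'' • n'' = 0)
    (R' R'' : Matrix (Fin 2) (Fin 2) ℝ)
    (hR'o : R' * R'ᵀ = 1) (hR'd : R'.det = 1) (hR'n : R' *ᵥ n = n')
    (hR''o : R'' * R''ᵀ = 1) (hR''d : R''.det = 1) (hR''n : R'' *ᵥ n = n'') :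
    ∀ v : Fin 2 → ℝ, σ • v + σ' • (R' *ᵥ v) + σ'' • (R'' *ᵥ v) = 0 := by
  obtain ⟨z', rfl⟩ := exists_leftMulMatrix_complex_eq_of_mul_transpose_eq_one hR'o hR'd
  obtain ⟨z'', rfl⟩ := exists_leftMulMatrix_complex_eq_of_mul_transpose_eq_one hR''o hR''d
  set L := Algebra.leftMulMatrix Complex.basisOneI
  have hL (v : Fin 2 → ℝ) :
      L (σ + σ' * z' + σ'' * z'') *ᵥ v = σ • v + σ' • (L z' *ᵥ v) + σ'' • (L z'' *ᵥ v) := by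
    rw [← Complex.real_smul, ← Complex.real_smul, ← Complex.coe_algebraMap]
    simp only [L, map_add, map_smul, map_one, Algebra.algebraMap_eq_smul_one, add_mulVec,
      smul_mulVec, one_mulVec]
  have hn0 : n ≠ 0 := by
    rintro rfl
    simp at hn
  have hw : (σ : ℂ) + σ' * z' + σ'' * z'' = 0 := by
    refine ((Algebra.leftMulMatrix_mulVec_eq_zero_iff Complex.basisOneI).mp ?_).resolve_right hn0
    rw [hL, hR'n, hR''n, hherring]
  intro v
  rw [← hL, hw, map_zero, zero_mulVec]

/-- Planar Herring condition by rotation: if unit vectors `n, n', n''` in `ℝ²`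
satisfy `σ n + σ' n' + σ'' n'' = 0` with positive surface tensions, and `R', R''`
are the planar rotations (elements of SO(2)) with `R' n = n'` and `R'' n = n''`,
then `σ v + σ' R' v + σ'' R'' v = 0` for every `v ∈ ℝ²`. -/
theorem herring_by_rotation_planar
    (σ σ' σ'' : ℝ) (hσ : 0 < σ) (hσ' : 0 < σ') (hσ'' : 0 < σ'')
    (n n' n'' : Fin 2 → ℝ)
    (hn : n ⬝ᵥ n = 1) (hn' : n' ⬝ᵥ n' = 1) (hn'' : n'' ⬝ᵥ n'' = 1)
    (hherring : σ • n + σ' • n' + σ'' • n'' = 0)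
    (R' R'' : Matrix (Fin 2) (Fin 2) ℝ)
    (hR'o : R' * R'ᵀ = 1) (hR'd : R'.det = 1) (hR'n : R' *ᵥ n = n')
    (hR''o : R'' * R''ᵀ = 1) (hR''d : R''.det = 1) (hR''n : R'' *ᵥ n = n'') :
    ∀ v : Fin 2 → ℝ, σ • v + σ' • (R' *ᵥ v) + σ'' • (R'' *ᵥ v) = 0 :=
  herring_by_rotation_planar_general σ σ' σ'' n n' n'' hn hherring R' R'' hR'o hR'd hR'n hR''o hR''d
    hR''n
end

section
/- Let (n, τ, t) be a C¹ orthonormal frame field on an open set U ⊂ ℝ³ with t = n × τ and (n·∇)τ = 0, and suppose ∇n is symmetric with (∇n)ᵀn = 0. Writing τ = J n with J = τ ∧ n + t ⊗ t, the divergence of τ admits the representation ∇·τ = (t ⊗ n) : (t·∇)(τ ∧ n), and the divergence of t satisfies ∇·t = −(t ⊗ τ) : ∇τ. -/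
open Matrix

/-!
Both divergences are traces of derivatives, so they can be computed in the orthonormal frame
`(n, τ, t)` with `t = n × τ`. Since `(n·∇)τ = 0` and `τ ⊥ ∂ᵥτ` (unit length), only the `t`-term
survives in `∇·τ`, leaving `t·(t·∇)τ`, which is also what the contraction of `(t·∇)(τ ∧ n)`
with `t ⊗ n` reduces to. For `∇·t` the product rule gives `∂ᵥt = ∂ᵥn × τ + n × ∂ᵥτ`; in the
frame all resulting triple products vanish except `−t·(τ·∇)τ` and `−t·(n·∇)n`, and the latter
equals `−n·(t·∇)n = 0` by the symmetry of `∇n` and `(∇n)ᵀn = 0`.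
-/

/-- The divergence `∇·f = ∑ᵢ ∂ᵢ fᵢ` of a vector field on `ℝ³`. -/
noncomputable def vdiv (f : (Fin 3 → ℝ) → (Fin 3 → ℝ)) (x : Fin 3 → ℝ) : ℝ :=
  ∑ i : Fin 3, fderiv ℝ f x (Pi.single i 1) i

theorem LinearMap.fderiv_apply_of_bilinear {𝕜 : Type*} [NontriviallyNormedField 𝕜] [CompleteSpace 𝕜]
    {E F G H : Type*} [NormedAddCommGroup E] [NormedSpace 𝕜 E] [FiniteDimensional 𝕜 E]
    [NormedAddCommGroup F] [NormedSpace 𝕜 F] [FiniteDimensional 𝕜 F]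
    [NormedAddCommGroup G] [NormedSpace 𝕜 G] [NormedAddCommGroup H] [NormedSpace 𝕜 H]
    (B : E →ₗ[𝕜] F →ₗ[𝕜] G) {f : H → E} {g : H → F} {x : H}
    (hf : DifferentiableAt 𝕜 f x) (hg : DifferentiableAt 𝕜 g x) (v : H) :
    fderiv 𝕜 (fun y => B (f y) (g y)) x v
      = B (fderiv 𝕜 f x v) (g x) + B (f x) (fderiv 𝕜 g x v) := by
  have h := B.toContinuousBilinearMap.fderiv_of_bilinear hf hg
  simpa [add_comm] using DFunLike.congr_fun h v

theorem dotProduct_fderiv_eq_zero_of_eventually_dotProduct_self_eq {ι : Type*} [Fintype ι]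
    {E : Type*} [NormedAddCommGroup E] [NormedSpace ℝ E] {f : E → ι → ℝ} {x : E} {c : ℝ}
    (hf : DifferentiableAt ℝ f x) (hc : ∀ᶠ y in nhds x, f y ⬝ᵥ f y = c) (v : E) :
    f x ⬝ᵥ fderiv ℝ f x v = 0 := by
  have h := (dotProductBilin ℝ ℝ).fderiv_apply_of_bilinear hf hf v
  have hconst : (fun y => dotProductBilin ℝ ℝ (f y) (f y)) =ᶠ[nhds x] fun _ => c := hc
  rw [hconst.fderiv_eq, fderiv_const_apply] at h
  simp only [_root_.zero_apply, dotProductBilin_apply_apply, dotProduct_comm (fderiv ℝ f x v)] at h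
  linarith

theorem LinearMap.trace_eq_sum_dotProduct_of_orthonormal {ι R : Type*} [Fintype ι] [DecidableEq ι]
    [CommRing R] (L : (ι → R) →ₗ[R] (ι → R)) {b : ι → ι → R}
    (hb : ∀ k l, b k ⬝ᵥ b l = if k = l then 1 else 0) :
    LinearMap.trace R (ι → R) L = ∑ k, b k ⬝ᵥ L (b k) := by
  set M := LinearMap.toMatrix' L
  set B : Matrix ι ι R := Matrix.of b
  have hBBt : B * Bᵀ = 1 := by
    ext k l
    simpa [B, mul_apply, dotProduct, one_apply] using hb k l
  have hBtB : Bᵀ * B = 1 := mul_eq_one_comm.mp hBBt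
  calc LinearMap.trace R (ι → R) L = Matrix.trace (M * (Bᵀ * B)) := by
        rw [hBtB, Matrix.mul_one, LinearMap.trace_eq_matrix_trace R (Pi.basisFun R ι),
          LinearMap.toMatrix_eq_toMatrix']
    _ = Matrix.trace (B * (M * Bᵀ)) := by rw [← Matrix.mul_assoc, Matrix.trace_mul_comm]
    _ = ∑ k, b k ⬝ᵥ L (b k) := by
        simp only [Matrix.trace, ← LinearMap.toMatrix'_mulVec, M]
        simp [B, mul_apply, mulVec, dotProduct, Finset.mul_sum, mul_comm]

theorem vdiv_eq_trace_fderiv (f : (Fin 3 → ℝ) → (Fin 3 → ℝ)) (x : Fin 3 → ℝ) :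
    vdiv f x = LinearMap.trace ℝ _ (fderiv ℝ f x : (Fin 3 → ℝ) →ₗ[ℝ] (Fin 3 → ℝ)) := by
  rw [LinearMap.trace_eq_matrix_trace ℝ (Pi.basisFun ℝ (Fin 3)), LinearMap.toMatrix_eq_toMatrix']
  simp [vdiv, Matrix.trace, LinearMap.toMatrix'_apply]

def wedge {ι R : Type*} [CommRing R] : (ι → R) →ₗ[R] (ι → R) →ₗ[R] (ι → ι → R) :=
  LinearMap.mk₂ R (fun u v i j => u i * v j - v i * u j)
    (fun _ _ _ => by ext; simp only [Pi.add_apply]; ring)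
    (fun _ _ _ => by ext; simp only [Pi.smul_apply, smul_eq_mul]; ring)
    (fun _ _ _ => by ext; simp only [Pi.add_apply]; ring)
    (fun _ _ _ => by ext; simp only [Pi.smul_apply, smul_eq_mul]; ring)

theorem sum_mul_mul_wedge {ι R : Type*} [Fintype ι] [CommRing R] (a b u v : ι → R) :
    ∑ i, ∑ j, a i * b j * wedge u v i j = (a ⬝ᵥ u) * (b ⬝ᵥ v) - (a ⬝ᵥ v) * (b ⬝ᵥ u) := by
  simp only [wedge, LinearMap.mk₂_apply, dotProduct, Finset.sum_mul_sum, ← Finset.sum_sub_distrib]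
  refine Finset.sum_congr rfl fun i _ => Finset.sum_congr rfl fun j _ => ?_
  ring

section Frame

variable {n τ : Fin 3 → ℝ}

theorem cross_dotProduct_cross_self (hn : n ⬝ᵥ n = 1) (hτ : τ ⬝ᵥ τ = 1) (hnτ : n ⬝ᵥ τ = 0) :
    n ⨯₃ τ ⬝ᵥ n ⨯₃ τ = 1 := by
  rw [cross_dot_cross, hn, hτ, hnτ, dotProduct_comm τ n, hnτ]; ring

theorem cross_cross_right_of_orthonormal (hτ : τ ⬝ᵥ τ = 1) (hnτ : n ⬝ᵥ τ = 0) :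
    τ ⨯₃ (n ⨯₃ τ) = n := by
  rw [cross_cross_eq_smul_sub_smul', hτ, hnτ]; simp

theorem cross_cross_left_of_orthonormal (hn : n ⬝ᵥ n = 1) (hnτ : n ⬝ᵥ τ = 0) :
    n ⨯₃ τ ⨯₃ n = τ := by
  rw [cross_cross_eq_smul_sub_smul, hn, dotProduct_comm, hnτ]; simp

theorem frame_sum_dotProduct_cross_eq (hn : n ⬝ᵥ n = 1) (hτ : τ ⬝ᵥ τ = 1) (hnτ : n ⬝ᵥ τ = 0)
    (N A : (Fin 3 → ℝ) → (Fin 3 → ℝ)) (hsymm : ∀ v w, N v ⬝ᵥ w = v ⬝ᵥ N w)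
    (hker : ∀ v, N v ⬝ᵥ n = 0) (hA : ∀ v, τ ⬝ᵥ A v = 0) :
    n ⬝ᵥ (N n ⨯₃ τ + n ⨯₃ A n) + τ ⬝ᵥ (N τ ⨯₃ τ + n ⨯₃ A τ)
      + n ⨯₃ τ ⬝ᵥ (N (n ⨯₃ τ) ⨯₃ τ + n ⨯₃ A (n ⨯₃ τ)) = -(n ⨯₃ τ ⬝ᵥ A τ) := by
  have hNn : n ⬝ᵥ N n ⨯₃ τ = 0 := by
    rw [triple_product_permutation, ← cross_anticomm, dotProduct_neg, hsymm, dotProduct_comm,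
      hker, neg_zero]
  have hAτ : τ ⬝ᵥ n ⨯₃ A τ = -(n ⨯₃ τ ⬝ᵥ A τ) := by
    rw [triple_product_permutation, triple_product_permutation, ← cross_anticomm, dotProduct_neg,
      dotProduct_comm]
  have hNt : n ⨯₃ τ ⬝ᵥ N (n ⨯₃ τ) ⨯₃ τ = 0 := by
    rw [triple_product_permutation, cross_cross_right_of_orthonormal hτ hnτ, hker]
  have hAt : n ⨯₃ τ ⬝ᵥ n ⨯₃ A (n ⨯₃ τ) = 0 := by
    rw [triple_product_permutation, triple_product_permutation,
      cross_cross_left_of_orthonormal hn hnτ, dotProduct_comm, hA]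
  simp only [dotProduct_add, hNn, dot_self_cross, dot_cross_self, hAτ, hNt, hAt]
  ring

theorem vdiv_eq_sum_frame (hn : n ⬝ᵥ n = 1) (hτ : τ ⬝ᵥ τ = 1) (hnτ : n ⬝ᵥ τ = 0)
    (f : (Fin 3 → ℝ) → (Fin 3 → ℝ)) (x : Fin 3 → ℝ) :
    vdiv f x = n ⬝ᵥ fderiv ℝ f x n + τ ⬝ᵥ fderiv ℝ f x τ
      + n ⨯₃ τ ⬝ᵥ fderiv ℝ f x (n ⨯₃ τ) := by
  rw [vdiv_eq_trace_fderiv, LinearMap.trace_eq_sum_dotProduct_of_orthonormal (b := ![n, τ, n ⨯₃ τ])]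
  · simp [Fin.sum_univ_three]
  · intro k l
    fin_cases k <;> fin_cases l <;>
      simp [hn, hτ, hnτ, dotProduct_comm τ n, dotProduct_comm (n ⨯₃ τ),
        cross_dotProduct_cross_self hn hτ hnτ]

end Frame

theorem divergence_representation_frame_general
    (U : Set (Fin 3 → ℝ)) (hU : IsOpen U)
    (n τ t : (Fin 3 → ℝ) → (Fin 3 → ℝ))
    (hn : ContDiffOn ℝ 1 n U) (hτ : ContDiffOn ℝ 1 τ U)
    (hframe : ∀ x ∈ U, n x ⬝ᵥ n x = 1 ∧ τ x ⬝ᵥ τ x = 1 ∧ n x ⬝ᵥ τ x = 0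
      ∧ t x = crossProduct (n x) (τ x))
    (hsymm : ∀ x ∈ U, ∀ v w : Fin 3 → ℝ,
      fderiv ℝ n x v ⬝ᵥ w = v ⬝ᵥ fderiv ℝ n x w)
    (hker : ∀ x ∈ U, ∀ v : Fin 3 → ℝ, fderiv ℝ n x v ⬝ᵥ n x = 0)
    (hnτ : ∀ x ∈ U, fderiv ℝ τ x (n x) = 0) :
    ∀ x ∈ U,
      (vdiv τ x = ∑ i : Fin 3, ∑ j : Fin 3, t x i * n x j *
          fderiv ℝ (fun y => fun i' j' : Fin 3 => τ y i' * n y j' - n y i' * τ y j')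
            x (t x) i j)
      ∧ vdiv t x = -(t x ⬝ᵥ fderiv ℝ τ x (τ x)) := by
  intro x hx
  obtain ⟨hnn, hττ, hnτx, htx⟩ := hframe x hx
  have hUx : U ∈ nhds x := hU.mem_nhds hx
  have hdn : DifferentiableAt ℝ n x := (hn.contDiffAt hUx).differentiableAt one_ne_zero
  have hdτ : DifferentiableAt ℝ τ x := (hτ.contDiffAt hUx).differentiableAt one_ne_zero
  have hτ_unit : ∀ v, τ x ⬝ᵥ fderiv ℝ τ x v = 0 :=
    dotProduct_fderiv_eq_zero_of_eventually_dotProduct_self_eq hdτ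
      (Filter.eventually_of_mem hUx fun y hy => (hframe y hy).2.1)
  have hdt : ∀ v, fderiv ℝ t x v = fderiv ℝ n x v ⨯₃ τ x + n x ⨯₃ fderiv ℝ τ x v := by
    have ht_cross : t =ᶠ[nhds x] fun y => n y ⨯₃ τ y :=
      Filter.eventually_of_mem hUx fun y hy => (hframe y hy).2.2.2
    intro v
    rw [ht_cross.fderiv_eq]
    exact crossProduct.fderiv_apply_of_bilinear hdn hdτ v
  have hdwedge : ∀ v, fderiv ℝ (fun y => wedge (τ y) (n y)) x v
      = wedge (fderiv ℝ τ x v) (n x) + wedge (τ x) (fderiv ℝ n x v) :=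
    wedge.fderiv_apply_of_bilinear hdτ hdn
  constructor
  · change _ = ∑ i, ∑ j, t x i * n x j * fderiv ℝ (fun y => wedge (τ y) (n y)) x (t x) i j
    simp only [hdwedge, Pi.add_apply, mul_add, Finset.sum_add_distrib, sum_mul_mul_wedge]
    have htn : t x ⬝ᵥ n x = 0 := by rw [htx, dotProduct_comm, dot_self_cross]
    have htτ : t x ⬝ᵥ τ x = 0 := by rw [htx, dotProduct_comm, dot_cross_self]
    rw [vdiv_eq_sum_frame hnn hττ hnτx, hnτ x hx, ← htx, hτ_unit]
    simp [hnn, hnτx, htn, htτ]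
  · rw [vdiv_eq_sum_frame hnn hττ hnτx, hdt, hdt, hdt, htx,
      frame_sum_dotProduct_cross_eq hnn hττ hnτx _ _ (hsymm x hx) (hker x hx) hτ_unit]

/-- For a C¹ orthonormal frame field `(n, τ, t)` with `t = n × τ`, `(n·∇)τ = 0`,
symmetric `∇n` with `(∇n)ᵀ n = 0`, the divergences admit the representations
`∇·τ = (t ⊗ n) : (t·∇)(τ ∧ n)` and `∇·t = −(t ⊗ τ) : ∇τ`. -/
theorem divergence_representation_frame
    (U : Set (Fin 3 → ℝ)) (hU : IsOpen U)
    (n τ t : (Fin 3 → ℝ) → (Fin 3 → ℝ))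
    (hn : ContDiffOn ℝ 1 n U) (hτ : ContDiffOn ℝ 1 τ U) (ht : ContDiffOn ℝ 1 t U)
    (hframe : ∀ x ∈ U, n x ⬝ᵥ n x = 1 ∧ τ x ⬝ᵥ τ x = 1 ∧ n x ⬝ᵥ τ x = 0
      ∧ t x = crossProduct (n x) (τ x))
    (hsymm : ∀ x ∈ U, ∀ v w : Fin 3 → ℝ,
      fderiv ℝ n x v ⬝ᵥ w = v ⬝ᵥ fderiv ℝ n x w)
    (hker : ∀ x ∈ U, ∀ v : Fin 3 → ℝ, fderiv ℝ n x v ⬝ᵥ n x = 0)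
    (hnτ : ∀ x ∈ U, fderiv ℝ τ x (n x) = 0) :
    ∀ x ∈ U,
      (vdiv τ x = ∑ i : Fin 3, ∑ j : Fin 3, t x i * n x j *
          fderiv ℝ (fun y => fun i' j' : Fin 3 => τ y i' * n y j' - n y i' * τ y j')
            x (t x) i j)
      ∧ vdiv t x = -(t x ⬝ᵥ fderiv ℝ τ x (τ x)) :=
  divergence_representation_frame_general U hU n τ t hn hτ hframe hsymm hker hnτ
end
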